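/- arXiv:2005.09440 — 6 statements merged into one kernel-verified Lean document; each statement's English description precedes it below -/
import Mathlib

section
/- Let f, g, h : ℤ → ℝ be finitely supported functions and define the cross-correlation Φ_{a,b}(u) = Σ_{p∈ℤ} a(p)·b(p−u) for finitely supported a, b : ℤ → ℝ. Then for every τ ∈ ℤ: Σ_{n∈ℤ} Φ_{f,g}(n)·Φ_{h,h}(n+τ) = Σ_{u∈ℤ} Φ_{f,h}(u)·Φ_{g,h}(u+τ). -/
/-- The involutive rearrangement `(n, p, q) ↦ (p - q, p, p - n)` on `ℤ³`. -/
def crossEquiv : Equiv.Perm (ℤ × ℤ × ℤ) :=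
  Function.Involutive.toPerm (fun x => (x.2.1 - x.2.2, x.2.1, x.2.1 - x.1))
    (by intro x; simp)

lemma summable_aux (f g h k : ℤ → ℝ)
    (hf : (Function.support f).Finite) (hg : (Function.support g).Finite)
    (hh : (Function.support h).Finite) (τ : ℤ) :
    Summable (fun x : ℤ × ℤ × ℤ =>
      f x.2.1 * g (x.2.1 - x.1) * (h x.2.2 * k (x.2.2 - (x.1 + τ)))) := by
  apply summable_of_finite_support
  apply Set.Finite.subset
    (((hf.prod (hg.prod hh)).image fun y : ℤ × ℤ × ℤ => (y.1 - y.2.1, y.1, y.2.2)))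
  intro x hx
  simp only [Function.mem_support, ne_eq] at hx
  refine ⟨(x.2.1, x.2.1 - x.1, x.2.2), ?_, ?_⟩
  · constructor
    · intro h0; apply hx; rw [h0]; ring
    constructor
    · intro h0; apply hx; rw [h0]; ring
    · intro h0; apply hx; rw [h0]; ring
  · simp

lemma triple_tsum (F : ℤ × ℤ × ℤ → ℝ) (hF : Summable F) :
    ∑' x : ℤ × ℤ × ℤ, F x = ∑' n : ℤ, ∑' p : ℤ, ∑' q : ℤ, F (n, p, q) := by
  rw [Summable.tsum_prod hF]
  exact tsum_congr fun n => Summable.tsum_prod (hF.prod_factor n)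

/-- for finitely supported `f, g, h : ℤ → ℝ`, with cross-correlation
`Φ_{a,b}(u) = Σ_p a(p)·b(p−u)`, one has
`Σ_n Φ_{f,g}(n)·Φ_{h,h}(n+τ) = Σ_u Φ_{f,h}(u)·Φ_{g,h}(u+τ)`. -/
theorem crosscorrelation_rearrangement (f g h : ℤ → ℝ)
    (hf : (Function.support f).Finite) (hg : (Function.support g).Finite)
    (hh : (Function.support h).Finite) :
    ∀ τ : ℤ,
      ∑' n : ℤ, (∑' p : ℤ, f p * g (p - n)) * (∑' p : ℤ, h p * h (p - (n + τ)))
        = ∑' u : ℤ, (∑' p : ℤ, f p * h (p - u)) * (∑' p : ℤ, g p * h (p - (u + τ))) := by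
  intro τ
  set T : ℤ × ℤ × ℤ → ℝ := fun x =>
    f x.2.1 * g (x.2.1 - x.1) * (h x.2.2 * h (x.2.2 - (x.1 + τ))) with hT
  set G : ℤ × ℤ × ℤ → ℝ := fun x =>
    f x.2.1 * h (x.2.1 - x.1) * (g x.2.2 * h (x.2.2 - (x.1 + τ))) with hG
  have hTsum : Summable T := summable_aux f g h h hf hg hh τ
  have hGsum : Summable G := summable_aux f h g h hf hh hg τ
  have key : T = fun x => G (crossEquiv x) := by
    funext x
    simp only [hT, hG, crossEquiv, Function.Involutive.toPerm, Equiv.coe_fn_mk]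
    have e1 : x.2.1 - (x.2.1 - x.2.2) = x.2.2 := by ring
    have e2 : x.2.1 - x.1 - (x.2.1 - x.2.2 + τ) = x.2.2 - (x.1 + τ) := by ring
    rw [e1, e2]; ring
  have step1 : ∀ n : ℤ,
      (∑' p : ℤ, f p * g (p - n)) * (∑' p : ℤ, h p * h (p - (n + τ)))
        = ∑' p : ℤ, ∑' q : ℤ, T (n, p, q) := by
    intro n
    rw [← tsum_mul_right]
    exact tsum_congr fun p => (tsum_mul_left).symm
  have step2 : ∀ u : ℤ,
      (∑' p : ℤ, f p * h (p - u)) * (∑' p : ℤ, g p * h (p - (u + τ)))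
        = ∑' p : ℤ, ∑' q : ℤ, G (u, p, q) := by
    intro u
    rw [← tsum_mul_right]
    exact tsum_congr fun p => (tsum_mul_left).symm
  calc ∑' n : ℤ, (∑' p : ℤ, f p * g (p - n)) * (∑' p : ℤ, h p * h (p - (n + τ)))
      = ∑' n : ℤ, ∑' p : ℤ, ∑' q : ℤ, T (n, p, q) := tsum_congr step1
    _ = ∑' x : ℤ × ℤ × ℤ, T x := (triple_tsum T hTsum).symm
    _ = ∑' x : ℤ × ℤ × ℤ, G (crossEquiv x) := by rw [key]
    _ = ∑' x : ℤ × ℤ × ℤ, G x := crossEquiv.tsum_eq G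
    _ = ∑' u : ℤ, ∑' p : ℤ, ∑' q : ℤ, G (u, p, q) := triple_tsum G hGsum
    _ = ∑' u : ℤ, (∑' p : ℤ, f p * h (p - u)) * (∑' p : ℤ, g p * h (p - (u + τ))) :=
        (tsum_congr step2).symm
end

section
/- Let (Ω, 𝔉, P) be a probability space, ι a finite index set, and R ∈ ℕ. Let ρ : Fin R → Fin R → ι → ℝ, and let ξ : Fin R → ι → Ω → ℝ be square-integrable random variables with E[ξ_r(i)] = 0 for all r, i, and E[ξ_r(i)·ξ_{r'}(i')] = ρ_{r,r'}(i) if i = i', and 0 if i ≠ i'. Let ω : Fin R → ι → ℝ, let ψ : ι → ℤ → ℝ be finitely supported in the ℤ-variable, and let g : ℤ → ℝ be finitely supported. Define X_r(t) = Σ_{i∈ι} ω_r(i)·ψ_i(t)·ξ_r(i) and d_r = Σ_{t∈ℤ} X_r(t)·g(t). Then for all r, r' ∈ Fin R: E[d_r·d_{r'}] = Σ_{i∈ι} ω_r(i)·ω_{r'}(i)·ρ_{r,r'}(i)·(Σ_{t∈ℤ} ψ_i(t)·g(t))². -/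
open MeasureTheory

/-!
As `g` is finitely supported, each wavelet coefficient is a finite linear combination
`d_r = ∑ i, a r i * c i * ξ r i` with `c i = ∑' t, ψ i t * g t`. Expanding `E[d_r d_r']`
bilinearly, the innovations at distinct indices are uncorrelated, so only the diagonal survives.
-/

theorem tsum_finsetSum_mul_of_finite_support {α κ : Type*} {g : α → ℝ}
    (hg : (Function.support g).Finite) (s : Finset κ) (f : κ → α → ℝ) :
    ∑' t, (∑ i ∈ s, f i t) * g t = ∑ i ∈ s, ∑' t, f i t * g t := by
  simp_rw [Finset.sum_mul]
  refine Summable.tsum_finsetSum fun i _ => summable_of_hasFiniteSupport ?_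
  exact hg.subset (Function.support_mul_subset_right _ _)

theorem integral_sum_mul_sum_of_memLp_two {Ω κ κ' : Type*} [MeasurableSpace Ω] {μ : Measure Ω}
    {s : Finset κ} {s' : Finset κ'} {f : κ → Ω → ℝ} {h : κ' → Ω → ℝ}
    (hf : ∀ i ∈ s, MemLp (f i) 2 μ) (hh : ∀ j ∈ s', MemLp (h j) 2 μ) (u : κ → ℝ) (v : κ' → ℝ) :
    ∫ ω, (∑ i ∈ s, u i * f i ω) * (∑ j ∈ s', v j * h j ω) ∂μ
      = ∑ i ∈ s, ∑ j ∈ s', u i * v j * ∫ ω, f i ω * h j ω ∂μ := by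
  have hint : ∀ i ∈ s, ∀ j ∈ s', Integrable (fun ω => u i * v j * (f i ω * h j ω)) μ :=
    fun i hi j hj => ((hf i hi).integrable_mul (hh j hj)).const_mul _
  have hexpand : (fun ω => (∑ i ∈ s, u i * f i ω) * (∑ j ∈ s', v j * h j ω))
      = fun ω => ∑ i ∈ s, ∑ j ∈ s', u i * v j * (f i ω * h j ω) := by
    ext ω
    rw [Finset.sum_mul_sum]
    exact Finset.sum_congr rfl fun i _ => Finset.sum_congr rfl fun j _ => by ring
  rw [hexpand, integral_finsetSum _ fun i hi => integrable_finsetSum _ (hint i hi)]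
  refine Finset.sum_congr rfl fun i hi => ?_
  rw [integral_finsetSum _ (hint i hi)]
  exact Finset.sum_congr rfl fun j _ => integral_const_mul _ _

theorem raw_cross_periodogram_expectation_coherence_general
    {Ω : Type*} [MeasurableSpace Ω] (μ : Measure Ω)
    {ι : Type*} [Fintype ι] [DecidableEq ι] (R : ℕ)
    (ρ : Fin R → Fin R → ι → ℝ)
    (ξ : Fin R → ι → Ω → ℝ)
    (hL2 : ∀ r i, MemLp (ξ r i) 2 μ)
    (hcov : ∀ r r' i i', ∫ ω, ξ r i ω * ξ r' i' ω ∂μ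
        = if i = i' then ρ r r' i else 0)
    (a : Fin R → ι → ℝ) (ψ : ι → ℤ → ℝ)
    (g : ℤ → ℝ) (hg : (Function.support g).Finite)
    (X : Fin R → ℤ → Ω → ℝ)
    (hX : ∀ r t ω, X r t ω = ∑ i : ι, a r i * ψ i t * ξ r i ω)
    (d : Fin R → Ω → ℝ)
    (hd : ∀ r ω, d r ω = ∑' t : ℤ, X r t ω * g t) :
    ∀ r r' : Fin R,
      ∫ ω, d r ω * d r' ω ∂μ
        = ∑ i : ι, a r i * a r' i * ρ r r' i * (∑' t : ℤ, ψ i t * g t) ^ 2 := by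
  intro r r'
  have hd_expand : ∀ r ω, d r ω = ∑ i, a r i * (∑' t : ℤ, ψ i t * g t) * ξ r i ω := fun r ω => by
    simp_rw [hd, hX, tsum_finsetSum_mul_of_finite_support hg]
    refine Finset.sum_congr rfl fun i _ => ?_
    rw [← tsum_mul_left, ← tsum_mul_right]
    exact tsum_congr fun t => by ring
  simp_rw [hd_expand, integral_sum_mul_sum_of_memLp_two (fun i _ => hL2 r i) (fun i _ => hL2 r' i),
    hcov, mul_ite, mul_zero, Finset.sum_ite_eq, Finset.mem_univ, if_true]
  exact Finset.sum_congr rfl fun i _ => by ring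

/-- expectation of the raw wavelet cross-periodogram for a replicate
locally stationary wavelet process with cross-replicate innovation dependence `ρ`. -/
theorem raw_cross_periodogram_expectation_coherence
    {Ω : Type*} [MeasurableSpace Ω] (μ : Measure Ω) [IsProbabilityMeasure μ]
    {ι : Type*} [Fintype ι] [DecidableEq ι] (R : ℕ)
    (ρ : Fin R → Fin R → ι → ℝ)
    (ξ : Fin R → ι → Ω → ℝ)
    (hL2 : ∀ r i, MemLp (ξ r i) 2 μ)
    (hmean : ∀ r i, ∫ ω, ξ r i ω ∂μ = 0)
    (hcov : ∀ r r' i i', ∫ ω, ξ r i ω * ξ r' i' ω ∂μ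
        = if i = i' then ρ r r' i else 0)
    (a : Fin R → ι → ℝ) (ψ : ι → ℤ → ℝ)
    (hψ : ∀ i, (Function.support (ψ i)).Finite)
    (g : ℤ → ℝ) (hg : (Function.support g).Finite)
    (X : Fin R → ℤ → Ω → ℝ)
    (hX : ∀ r t ω, X r t ω = ∑ i : ι, a r i * ψ i t * ξ r i ω)
    (d : Fin R → Ω → ℝ)
    (hd : ∀ r ω, d r ω = ∑' t : ℤ, X r t ω * g t) :
    ∀ r r' : Fin R,
      ∫ ω, d r ω * d r' ω ∂μ
        = ∑ i : ι, a r i * a r' i * ρ r r' i * (∑' t : ℤ, ψ i t * g t) ^ 2 :=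
  raw_cross_periodogram_expectation_coherence_general μ R ρ ξ hL2 hcov a ψ g hg X hX d hd
end

section
/- Let Ψ : ℕ → ℤ → ℝ, L : ℕ → ℝ with L_l ≥ 0, j ∈ ℕ, and constants K, Λ ≥ 0 satisfy: Σ_{m∈ℤ} |Ψ_l(m)| ≤ K·2^l for every l, and Σ_{l∈ℕ} 2^l·L_l ≤ Λ, with the triply indexed family (l, τ, n) ↦ L_l·|Ψ_j(n)·Ψ_l(n+τ)| summable. Then Σ_{τ∈ℤ} |Σ_{l∈ℕ} L_l · Σ_{n∈ℤ} Ψ_j(n)·Ψ_l(n+τ)| ≤ K²·Λ·2^j. -/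
set_option maxHeartbeats 1000000

private lemma abs_tsum_le_tsum_abs' {ι : Type*} {f : ι → ℝ}
    (h : Summable fun i => |f i|) : |∑' i, f i| ≤ ∑' i, |f i| := by
  have := norm_tsum_le_tsum_norm (f := f) (by simpa [Real.norm_eq_abs] using h)
  simpa [Real.norm_eq_abs] using this


/-- `Σ_τ |Σ_l L_l·A^τ_{j,l}| ≤ K²·Λ·2^j` where
`A^τ_{j,l} = Σ_n Ψ_j(n)Ψ_l(n+τ)`, `Σ_m |Ψ_l(m)| ≤ K·2^l` and `Σ_l 2^l L_l ≤ Λ`. -/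
theorem summed_lagged_lipschitz_bound (Ψ : ℕ → ℤ → ℝ) (L : ℕ → ℝ)
    (hL : ∀ l, 0 ≤ L l) (j : ℕ) (K Λ : ℝ) (hK : 0 ≤ K) (hΛ : 0 ≤ Λ)
    (hΨs : ∀ l, Summable (fun m : ℤ => |Ψ l m|))
    (hΨ : ∀ l : ℕ, ∑' m : ℤ, |Ψ l m| ≤ K * 2 ^ l)
    (hLs : Summable (fun l : ℕ => 2 ^ l * L l))
    (hLΛ : ∑' l : ℕ, 2 ^ l * L l ≤ Λ)
    (htriple : Summable
      (fun p : ℕ × ℤ × ℤ => L p.1 * |Ψ j p.2.2 * Ψ p.1 (p.2.2 + p.2.1)|)) :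
    ∑' τ : ℤ, |∑' l : ℕ, L l * ∑' n : ℤ, Ψ j n * Ψ l (n + τ)| ≤ K ^ 2 * Λ * 2 ^ j := by
  set F : ℕ × ℤ × ℤ → ℝ := fun p => L p.1 * |Ψ j p.2.2 * Ψ p.1 (p.2.2 + p.2.1)| with hFdef
  have hF : Summable F := htriple
  have hF0 : ∀ p, 0 ≤ F p := fun p => mul_nonneg (hL _) (abs_nonneg _)
  -- translated summability
  have htrans : ∀ (l : ℕ) (τ : ℤ), Summable (fun n : ℤ => |Ψ l (n + τ)|) := by
    intro l τ
    exact ((Equiv.addRight τ).summable_iff.mpr (hΨs l))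
  have htsum_trans : ∀ (l : ℕ) (τ : ℤ),
      ∑' n : ℤ, |Ψ l (n + τ)| = ∑' m : ℤ, |Ψ l m| := by
    intro l τ
    exact (Equiv.addRight τ).tsum_eq (fun m => |Ψ l m|)
  -- product summability for each l, τ
  have hprod : ∀ (l : ℕ) (τ : ℤ), Summable (fun n : ℤ => |Ψ j n * Ψ l (n + τ)|) := by
    intro l τ
    have hb : ∀ n : ℤ, |Ψ j n * Ψ l (n + τ)| ≤ (∑' m : ℤ, |Ψ j m|) * |Ψ l (n + τ)| := by
      intro n
      rw [abs_mul]
      exact mul_le_mul_of_nonneg_right (Summable.le_tsum (hΨs j) n fun _ _ => abs_nonneg _)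
        (abs_nonneg _)
    exact Summable.of_nonneg_of_le (fun n => abs_nonneg _) hb ((htrans l τ).mul_left _)
  -- key per-(l,τ): bound on the inner term
  have hinner : ∀ (l : ℕ) (τ : ℤ),
      L l * |∑' n : ℤ, Ψ j n * Ψ l (n + τ)| ≤ ∑' n : ℤ, F (l, τ, n) := by
    intro l τ
    have h1 : |∑' n : ℤ, Ψ j n * Ψ l (n + τ)| ≤ ∑' n : ℤ, |Ψ j n * Ψ l (n + τ)| :=
      abs_tsum_le_tsum_abs' (hprod l τ)
    calc L l * |∑' n : ℤ, Ψ j n * Ψ l (n + τ)|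
        ≤ L l * ∑' n : ℤ, |Ψ j n * Ψ l (n + τ)| :=
          mul_le_mul_of_nonneg_left h1 (hL l)
      _ = ∑' n : ℤ, F (l, τ, n) := (tsum_mul_left).symm
  -- slices of F
  have hFτ : ∀ τ : ℤ, Summable (fun q : ℕ × ℤ => F (q.1, τ, q.2)) := by
    intro τ
    apply hF.comp_injective (i := fun q : ℕ × ℤ => (q.1, τ, q.2))
    intro a b h
    simpa [Prod.ext_iff] using h
  -- the rearranged function G on ℤ × ℕ × ℤ
  set G : ℤ × ℕ × ℤ → ℝ := fun q => F (q.2.1, q.1, q.2.2) with hGdef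
  have hGe : Summable G := by
    apply hF.comp_injective (i := fun q : ℤ × ℕ × ℤ => (q.2.1, q.1, q.2.2))
    intro a b h
    simp only [Prod.ext_iff] at h
    exact Prod.ext h.2.1 (Prod.ext h.1 h.2.2)
  have hG0 : ∀ q, 0 ≤ G q := fun q => hF0 _
  -- S τ := ∑' (l,n)
  have hSτ : ∀ τ : ℤ, ∑' q : ℕ × ℤ, F (q.1, τ, q.2) = ∑' l : ℕ, ∑' n : ℤ, F (l, τ, n) :=
    fun τ => Summable.tsum_prod' (hFτ τ) (fun l => (hFτ τ).prod_factor l)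
  -- per-τ bound
  have houter : ∀ τ : ℤ,
      |∑' l : ℕ, L l * ∑' n : ℤ, Ψ j n * Ψ l (n + τ)| ≤ ∑' q : ℕ × ℤ, F (q.1, τ, q.2) := by
    intro τ
    have hs1 : Summable (fun l : ℕ => ∑' n : ℤ, F (l, τ, n)) :=
      ((summable_prod_of_nonneg (fun q => hF0 _)).mp (hFτ τ)).2
    have hterm : ∀ l : ℕ, |L l * ∑' n : ℤ, Ψ j n * Ψ l (n + τ)| ≤ ∑' n : ℤ, F (l, τ, n) := by
      intro l
      rw [abs_mul, abs_of_nonneg (hL l)]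
      exact hinner l τ
    have hsL : Summable (fun l : ℕ => |L l * ∑' n : ℤ, Ψ j n * Ψ l (n + τ)|) :=
      Summable.of_nonneg_of_le (fun l => abs_nonneg _) hterm hs1
    calc |∑' l : ℕ, L l * ∑' n : ℤ, Ψ j n * Ψ l (n + τ)|
        ≤ ∑' l : ℕ, |L l * ∑' n : ℤ, Ψ j n * Ψ l (n + τ)| := abs_tsum_le_tsum_abs' hsL
      _ ≤ ∑' l : ℕ, ∑' n : ℤ, F (l, τ, n) := Summable.tsum_le_tsum hterm hsL hs1
      _ = ∑' q : ℕ × ℤ, F (q.1, τ, q.2) := (hSτ τ).symm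
  -- sum of S over τ equals the total sum of F
  have hStot : ∑' τ : ℤ, ∑' q : ℕ × ℤ, F (q.1, τ, q.2) = ∑' p : ℕ × ℤ × ℤ, F p := by
    have h1 : ∑' q : ℤ × ℕ × ℤ, G q = ∑' τ : ℤ, ∑' q : ℕ × ℤ, F (q.1, τ, q.2) :=
      Summable.tsum_prod' hGe (fun τ => hGe.prod_factor τ)
    have h2 : ∑' q : ℤ × ℕ × ℤ, G q = ∑' p : ℕ × ℤ × ℤ, F p :=
      Equiv.tsum_eq (⟨fun q => (q.2.1, q.1, q.2.2), fun p => (p.2.1, p.1, p.2.2),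
        fun q => rfl, fun p => rfl⟩ : ℤ × ℕ × ℤ ≃ ℕ × ℤ × ℤ) F
    rw [← h1, h2]
  have hSsum : Summable (fun τ : ℤ => ∑' q : ℕ × ℤ, F (q.1, τ, q.2)) :=
    ((summable_prod_of_nonneg (fun q => hG0 _)).mp hGe).2
  -- now compute / bound the total sum of F
  have hFslice : ∀ l : ℕ, Summable (fun r : ℤ × ℤ => F (l, r)) := by
    intro l
    apply hF.comp_injective (i := fun r : ℤ × ℤ => (l, r))
    intro a b h
    simpa [Prod.ext_iff] using h
  have hΨjl : ∀ l : ℕ, Summable (fun r : ℤ × ℤ => |Ψ j r.1| * |Ψ l r.2|) :=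
    fun l => (hΨs j).mul_of_nonneg (hΨs l) (fun _ => abs_nonneg _) (fun _ => abs_nonneg _)
  have hsliceval : ∀ l : ℕ, ∑' r : ℤ × ℤ, F (l, r)
      = L l * ((∑' m : ℤ, |Ψ j m|) * (∑' m : ℤ, |Ψ l m|)) := by
    intro l
    have h3 : ∑' r : ℤ × ℤ, L l * (|Ψ j r.1| * |Ψ l r.2|)
        = ∑' r : ℤ × ℤ, F (l, r) := by
      rw [← Equiv.tsum_eq (⟨fun r => (r.2 - r.1, r.1), fun s => (s.2, s.2 + s.1),
        fun r => by simp, fun s => by simp⟩ : ℤ × ℤ ≃ ℤ × ℤ) (fun r : ℤ × ℤ => F (l, r))]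
      apply tsum_congr
      intro r
      have hr : r.1 + (r.2 - r.1) = r.2 := by ring
      show L l * (|Ψ j r.1| * |Ψ l r.2|) = L l * |Ψ j r.1 * Ψ l (r.1 + (r.2 - r.1))|
      rw [hr, abs_mul]
    rw [← h3, tsum_mul_left]
    congr 1
    rw [Summable.tsum_prod' (hΨjl l) (fun n => (hΨjl l).prod_factor n)]
    have h4 : ∀ n : ℤ, ∑' m : ℤ, |Ψ j n| * |Ψ l m| = |Ψ j n| * ∑' m : ℤ, |Ψ l m| :=
      fun n => tsum_mul_left
    simp_rw [h4]
    rw [tsum_mul_right]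
  -- bound each slice
  have hbnd : ∀ l : ℕ, L l * ((∑' m : ℤ, |Ψ j m|) * (∑' m : ℤ, |Ψ l m|))
      ≤ K ^ 2 * 2 ^ j * (2 ^ l * L l) := by
    intro l
    have h1 : (∑' m : ℤ, |Ψ j m|) * (∑' m : ℤ, |Ψ l m|) ≤ (K * 2 ^ j) * (K * 2 ^ l) :=
      mul_le_mul (hΨ j) (hΨ l) (tsum_nonneg fun _ => abs_nonneg _) (by positivity)
    calc L l * ((∑' m : ℤ, |Ψ j m|) * (∑' m : ℤ, |Ψ l m|))
        ≤ L l * ((K * 2 ^ j) * (K * 2 ^ l)) := mul_le_mul_of_nonneg_left h1 (hL l)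
      _ = K ^ 2 * 2 ^ j * (2 ^ l * L l) := by ring
  have htotal : ∑' p : ℕ × ℤ × ℤ, F p ≤ K ^ 2 * Λ * 2 ^ j := by
    rw [Summable.tsum_prod' hF (fun l => hF.prod_factor l)]
    have hs1 : Summable (fun l : ℕ => ∑' r : ℤ × ℤ, F (l, r)) :=
      ((summable_prod_of_nonneg (fun p => hF0 _)).mp hF).2
    calc ∑' l : ℕ, ∑' r : ℤ × ℤ, F (l, r)
        ≤ ∑' l : ℕ, K ^ 2 * 2 ^ j * (2 ^ l * L l) := by
          refine Summable.tsum_le_tsum (fun l => ?_) hs1 (hLs.mul_left _)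
          rw [hsliceval l]; exact hbnd l
      _ = K ^ 2 * 2 ^ j * ∑' l : ℕ, 2 ^ l * L l := tsum_mul_left
      _ ≤ K ^ 2 * 2 ^ j * Λ := by
          refine mul_le_mul_of_nonneg_left hLΛ (by positivity)
      _ = K ^ 2 * Λ * 2 ^ j := by ring
  have hLHSsum : Summable (fun τ : ℤ => |∑' l : ℕ, L l * ∑' n : ℤ, Ψ j n * Ψ l (n + τ)|) :=
    Summable.of_nonneg_of_le (fun _ => abs_nonneg _) houter hSsum
  calc ∑' τ : ℤ, |∑' l : ℕ, L l * ∑' n : ℤ, Ψ j n * Ψ l (n + τ)|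
      ≤ ∑' τ : ℤ, ∑' q : ℕ × ℤ, F (q.1, τ, q.2) := Summable.tsum_le_tsum houter hLHSsum hSsum
    _ = ∑' p : ℕ × ℤ × ℤ, F p := hStot
    _ ≤ K ^ 2 * Λ * 2 ^ j := htotal
end

section
/- Let Ψ : ℕ → ℤ → ℝ satisfy: for every m ∈ ℤ the series Σ_{l∈ℕ} 2^{-l}·Ψ_l(m) converges absolutely with sum equal to 1 if m = 0 and 0 otherwise. Fix j ∈ ℕ and τ ∈ ℤ, and assume the doubly indexed family (l, n) ↦ 2^{-l}·|Ψ_j(n)·Ψ_l(n+τ)| is summable. Then Σ_{l∈ℕ} 2^{-l}·(Σ_{n∈ℤ} Ψ_j(n)·Ψ_l(n+τ)) = Ψ_j(−τ). -/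
/-- the reproducing identity `Σ_l 2^{-l}·A^τ_{j,l} = Ψ_j(−τ)` where
`A^τ_{j,l} = Σ_n Ψ_j(n)Ψ_l(n+τ)` and `Σ_l 2^{-l}Ψ_l(m) = δ_{m,0}`. -/
theorem reproducing_identity_lagged (Ψ : ℕ → ℤ → ℝ)
    (habs : ∀ m : ℤ, Summable (fun l : ℕ => ((2 : ℝ) ^ l)⁻¹ * |Ψ l m|))
    (hdelta : ∀ m : ℤ, ∑' l : ℕ, ((2 : ℝ) ^ l)⁻¹ * Ψ l m = if m = 0 then 1 else 0)
    (j : ℕ) (τ : ℤ)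
    (hsum : Summable
      (fun p : ℕ × ℤ => ((2 : ℝ) ^ p.1)⁻¹ * |Ψ j p.2 * Ψ p.1 (p.2 + τ)|)) :
    ∑' l : ℕ, ((2 : ℝ) ^ l)⁻¹ * ∑' n : ℤ, Ψ j n * Ψ l (n + τ) = Ψ j (-τ) := by
  have hf : Summable (fun p : ℕ × ℤ =>
      ((2 : ℝ) ^ p.1)⁻¹ * (Ψ j p.2 * Ψ p.1 (p.2 + τ))) := by
    apply Summable.of_abs
    have : (fun p : ℕ × ℤ => |((2 : ℝ) ^ p.1)⁻¹ * (Ψ j p.2 * Ψ p.1 (p.2 + τ))|)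
        = fun p : ℕ × ℤ => ((2 : ℝ) ^ p.1)⁻¹ * |Ψ j p.2 * Ψ p.1 (p.2 + τ)| := by
      funext p
      rw [abs_mul, abs_inv, abs_pow, abs_two]
    rw [this]; exact hsum
  have h1 : ∀ l : ℕ, ((2 : ℝ) ^ l)⁻¹ * ∑' n : ℤ, Ψ j n * Ψ l (n + τ)
      = ∑' n : ℤ, ((2 : ℝ) ^ l)⁻¹ * (Ψ j n * Ψ l (n + τ)) := fun l =>
    (tsum_mul_left).symm
  calc ∑' l : ℕ, ((2 : ℝ) ^ l)⁻¹ * ∑' n : ℤ, Ψ j n * Ψ l (n + τ)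
      = ∑' l : ℕ, ∑' n : ℤ, ((2 : ℝ) ^ l)⁻¹ * (Ψ j n * Ψ l (n + τ)) := by
        exact tsum_congr h1
    _ = ∑' n : ℤ, ∑' l : ℕ, ((2 : ℝ) ^ l)⁻¹ * (Ψ j n * Ψ l (n + τ)) := by
        exact (Summable.tsum_comm (f := fun l n => ((2 : ℝ) ^ l)⁻¹ * (Ψ j n * Ψ l (n + τ))) hf).symm
    _ = ∑' n : ℤ, Ψ j n * (if n + τ = 0 then 1 else 0) := by
        refine tsum_congr fun n => ?_
        rw [← hdelta (n + τ), ← tsum_mul_left]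
        refine tsum_congr fun l => by ring
    _ = Ψ j (-τ) := by
        rw [tsum_eq_single (-τ) (fun n hn => ?_)]
        · simp
        · have : ¬ (n + τ = 0) := fun h => hn (by linarith)
          simp [this]
end

section
/- Let ψ : ℕ → ℤ → ℝ, ω : ℕ → ℤ → ℝ, S : ℕ → ℝ → ℝ, and constants K ≥ 0, C̄, D̄, L̄ ≥ 0, T, R > 0, and nonnegative sequences C, D, L : ℕ → ℝ satisfy: (i) Σ_{n∈ℤ} ψ_j(n)² ≤ 1 for every j, and ψ_j(n) = 0 whenever |n| > K·2^j; (ii) |ω_{j,m}² − S_j(m/T)| ≤ C_j/T + D_j/R for all j ∈ ℕ and m ∈ ℤ; (iii) |S_j(x) − S_j(y)| ≤ L_j·|x−y| for all x, y; (iv) Σ_j C_j ≤ C̄, Σ_j D_j ≤ D̄, Σ_j 2^j·L_j ≤ L̄; (v) for fixed k, τ ∈ ℤ the doubly indexed family (j,n) ↦ ω_{j,n+k}²·|ψ_j(n)·ψ_j(n−τ)| is summable and Σ_j |S_j(k/T)| < ∞. Define the autocorrelation wavelet Ψ_j(τ) = Σ_{n∈ℤ} ψ_j(n)·ψ_j(n−τ).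 Then for all k, τ ∈ ℤ: |Σ_{j∈ℕ} Σ_{n∈ℤ} ω_{j,n+k}²·ψ_j(n)·ψ_j(n−τ) − Σ_{j∈ℕ} S_j(k/T)·Ψ_j(τ)| ≤ (C̄ + K·L̄)/T + D̄/R. -/
/-!
At level `j` the two inner sums differ by `∑ₙ (ω²_{j,n+k} - S_j(k/T)) ψ_j(n) ψ_j(n-τ)`.
Only `|n| ≤ K 2^j` contributes, and there the amplitude approximation and the Lipschitz
bound give `|ω²_{j,n+k} - S_j(k/T)| ≤ C_j/T + D_j/R + L_j K 2^j / T`, while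
`∑ₙ |ψ_j(n) ψ_j(n-τ)| ≤ ∑ₙ ψ_j(n)² ≤ 1` by `2|ab| ≤ a² + b²`. Summing these level errors
over `j` gives the bound.
-/

section Summation

variable {ι : Type*}

theorem abs_mul_le_add_sq_div_two (a b : ℝ) : |a * b| ≤ (a ^ 2 + b ^ 2) / 2 := by
  have := two_mul_le_add_sq |a| |b|
  rw [sq_abs, sq_abs] at this
  rw [abs_mul]
  linarith

theorem summable_abs_mul_of_summable_sq {f g : ι → ℝ} (hf : Summable fun i => f i ^ 2)
    (hg : Summable fun i => g i ^ 2) : Summable fun i => |f i * g i| :=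
  ((hf.add hg).div_const 2).of_nonneg_of_le (fun _ => abs_nonneg _)
    fun i => abs_mul_le_add_sq_div_two (f i) (g i)

theorem tsum_abs_mul_le_of_summable_sq {f g : ι → ℝ} (hf : Summable fun i => f i ^ 2)
    (hg : Summable fun i => g i ^ 2) :
    ∑' i, |f i * g i| ≤ (∑' i, f i ^ 2 + ∑' i, g i ^ 2) / 2 := by
  rw [← hf.tsum_add hg, ← tsum_div_const]
  exact (summable_abs_mul_of_summable_sq hf hg).tsum_le_tsum
    (fun i => abs_mul_le_add_sq_div_two (f i) (g i)) ((hf.add hg).div_const 2)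

theorem summable_abs_mul_comp_sub {G : Type*} [AddGroup G] {ψ : G → ℝ}
    (hψ : Summable fun n => ψ n ^ 2) (τ : G) : Summable fun n => |ψ n * ψ (n - τ)| :=
  summable_abs_mul_of_summable_sq hψ ((Equiv.subRight τ).summable_iff.2 hψ)

theorem tsum_abs_mul_comp_sub_le {G : Type*} [AddGroup G] {ψ : G → ℝ}
    (hψ : Summable fun n => ψ n ^ 2) (τ : G) : ∑' n, |ψ n * ψ (n - τ)| ≤ ∑' n, ψ n ^ 2 := by
  have hshift := (Equiv.subRight τ).tsum_eq fun n => ψ n ^ 2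
  have := tsum_abs_mul_le_of_summable_sq hψ ((Equiv.subRight τ).summable_iff.2 hψ)
  simp only [Equiv.subRight_apply] at hshift this
  linarith

theorem abs_tsum_sub_tsum_le {a b E : ι → ℝ} (ha : Summable a) (hb : Summable b)
    (hE : Summable E) (h : ∀ i, |a i - b i| ≤ E i) : |∑' i, a i - ∑' i, b i| ≤ ∑' i, E i := by
  rw [← ha.tsum_sub hb]
  exact tsum_of_norm_bounded (f := fun i => a i - b i) hE.hasSum h

theorem abs_tsum_mul_sub_mul_tsum_le {f w : ι → ℝ} {s E : ℝ} (hE : 0 ≤ E)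
    (hw : Summable fun i => w i * f i) (hf : Summable fun i => |f i|)
    (hf₁ : ∑' i, |f i| ≤ 1) (hwE : ∀ i, f i ≠ 0 → |w i - s| ≤ E) :
    |∑' i, w i * f i - s * ∑' i, f i| ≤ E := by
  have hpoint : ∀ i, |w i * f i - s * f i| ≤ E * |f i| := by
    intro i
    rw [← sub_mul, abs_mul]
    rcases eq_or_ne (f i) 0 with hfi | hfi
    · simp [hfi]
    · exact mul_le_mul_of_nonneg_right (hwE i hfi) (abs_nonneg _)
  calc |∑' i, w i * f i - s * ∑' i, f i|
      ≤ ∑' i, E * |f i| := by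
        rw [← tsum_mul_left]
        exact abs_tsum_sub_tsum_le hw (hf.of_abs.mul_left s) (hf.mul_left E) hpoint
    _ = E * ∑' i, |f i| := tsum_mul_left
    _ ≤ E := mul_le_of_le_one_right hE hf₁

end Summation

theorem abs_sub_le_of_abs_sub_le_of_lipschitz {S : ℝ → ℝ} {L w x y ε δ : ℝ} (hL : 0 ≤ L)
    (hS : ∀ x y, |S x - S y| ≤ L * |x - y|) (hw : |w - S x| ≤ ε) (hxy : |x - y| ≤ δ) :
    |w - S y| ≤ ε + L * δ :=
  calc |w - S y| ≤ |w - S x| + |S x - S y| := abs_sub_le _ _ _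
    _ ≤ ε + L * δ := add_le_add hw ((hS x y).trans (mul_le_mul_of_nonneg_left hxy hL))

theorem abs_intCast_add_div_sub_div_le {n k : ℤ} {T M : ℝ} (hT : 0 < T) (hn : |(n : ℝ)| ≤ M) :
    |((n + k : ℤ) : ℝ) / T - k / T| ≤ M / T := by
  rw [Int.cast_add, add_div, add_sub_cancel_right, abs_div, abs_of_pos hT]
  gcongr

theorem autocovariance_approximation_general (ψ : ℕ → ℤ → ℝ) (ω : ℕ → ℤ → ℝ)
    (S : ℕ → ℝ → ℝ) (K Cb Db Lb : ℝ)
    (hK : 0 ≤ K)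
    (T R : ℝ) (hT : 0 < T) (hR : 0 < R)
    (C D L : ℕ → ℝ) (hC : ∀ j, 0 ≤ C j) (hD : ∀ j, 0 ≤ D j) (hL : ∀ j, 0 ≤ L j)
    (hψsq : ∀ j, Summable (fun n : ℤ => ψ j n ^ 2))
    (hψnorm : ∀ j : ℕ, ∑' n : ℤ, ψ j n ^ 2 ≤ 1)
    (hψsupp : ∀ (j : ℕ) (n : ℤ), K * 2 ^ j < |(n : ℝ)| → ψ j n = 0)
    (hamp : ∀ (j : ℕ) (m : ℤ), |ω j m ^ 2 - S j ((m : ℝ) / T)| ≤ C j / T + D j / R)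
    (hSlip : ∀ (j : ℕ) (x y : ℝ), |S j x - S j y| ≤ L j * |x - y|)
    (hCs : Summable C) (hCsum : ∑' j : ℕ, C j ≤ Cb)
    (hDs : Summable D) (hDsum : ∑' j : ℕ, D j ≤ Db)
    (hLs : Summable (fun j : ℕ => 2 ^ j * L j))
    (hLsum : ∑' j : ℕ, 2 ^ j * L j ≤ Lb)
    (k τ : ℤ)
    (hωsum : Summable
      (fun p : ℕ × ℤ => ω p.1 (p.2 + k) ^ 2 * |ψ p.1 p.2 * ψ p.1 (p.2 - τ)|))
    (hSsum : Summable (fun j : ℕ => |S j ((k : ℝ) / T)|)) :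
    |(∑' j : ℕ, ∑' n : ℤ, ω j (n + k) ^ 2 * (ψ j n * ψ j (n - τ))) -
        ∑' j : ℕ, S j ((k : ℝ) / T) * ∑' n : ℤ, ψ j n * ψ j (n - τ)|
      ≤ (Cb + K * Lb) / T + Db / R := by
  have hΨ j := summable_abs_mul_comp_sub (hψsq j) τ
  have hΨ₁ j := (tsum_abs_mul_comp_sub_le (hψsq j) τ).trans (hψnorm j)
  have hA : Summable fun p : ℕ × ℤ => ω p.1 (p.2 + k) ^ 2 * (ψ p.1 p.2 * ψ p.1 (p.2 - τ)) :=
    hωsum.of_norm_bounded fun p => by simp [abs_mul]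
  have hB : Summable fun j => S j ((k : ℝ) / T) * ∑' n : ℤ, ψ j n * ψ j (n - τ) :=
    hSsum.of_norm_bounded fun j => by
      rw [norm_mul, Real.norm_eq_abs]
      exact mul_le_of_le_one_right (abs_nonneg _)
        ((tsum_of_norm_bounded (hΨ j).hasSum fun _ => le_rfl).trans (hΨ₁ j))
  set E : ℕ → ℝ := fun j => C j / T + D j / R + K / T * (2 ^ j * L j)
  have hE : HasSum E ((∑' j, C j) / T + (∑' j, D j) / R + K / T * ∑' j : ℕ, 2 ^ j * L j) :=
    ((hCs.hasSum.div_const T).add (hDs.hasSum.div_const R)).add (hLs.hasSum.mul_left (K / T))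
  have hlevel j : |∑' n : ℤ, ω j (n + k) ^ 2 * (ψ j n * ψ j (n - τ)) -
      S j ((k : ℝ) / T) * ∑' n : ℤ, ψ j n * ψ j (n - τ)| ≤ E j := by
    have hEj : 0 ≤ E j := by
      have := hC j; have := hD j; have := hL j
      positivity
    refine abs_tsum_mul_sub_mul_tsum_le hEj (hA.prod_factor j) (hΨ j) (hΨ₁ j) fun n hn => ?_
    have hsupp : |(n : ℝ)| ≤ K * 2 ^ j :=
      not_lt.1 fun h => left_ne_zero_of_mul hn (hψsupp j n h)
    exact (abs_sub_le_of_abs_sub_le_of_lipschitz (hL j) (hSlip j) (hamp j (n + k))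
      (abs_intCast_add_div_sub_div_le hT hsupp)).trans_eq (by ring)
  calc _ ≤ ∑' j, E j := abs_tsum_sub_tsum_le hA.prod hB hE.summable hlevel
    _ = ((∑' j, C j) + K * ∑' j : ℕ, 2 ^ j * L j) / T + (∑' j, D j) / R := by
        rw [hE.tsum_eq]; ring
    _ ≤ (Cb + K * Lb) / T + Db / R := by gcongr

/-- deterministic core of the autocovariance approximation: the process
autocovariance `Σ_j Σ_n ω²_{j,n+k} ψ_j(n)ψ_j(n−τ)` is within `(C̄+K·L̄)/T + D̄/R`
of the local autocovariance `Σ_j S_j(k/T)·Ψ_j(τ)`. -/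
theorem autocovariance_approximation (ψ : ℕ → ℤ → ℝ) (ω : ℕ → ℤ → ℝ)
    (S : ℕ → ℝ → ℝ) (K Cb Db Lb : ℝ)
    (hK : 0 ≤ K) (hCb : 0 ≤ Cb) (hDb : 0 ≤ Db) (hLb : 0 ≤ Lb)
    (T R : ℝ) (hT : 0 < T) (hR : 0 < R)
    (C D L : ℕ → ℝ) (hC : ∀ j, 0 ≤ C j) (hD : ∀ j, 0 ≤ D j) (hL : ∀ j, 0 ≤ L j)
    (hψsq : ∀ j, Summable (fun n : ℤ => ψ j n ^ 2))
    (hψnorm : ∀ j : ℕ, ∑' n : ℤ, ψ j n ^ 2 ≤ 1)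
    (hψsupp : ∀ (j : ℕ) (n : ℤ), K * 2 ^ j < |(n : ℝ)| → ψ j n = 0)
    (hamp : ∀ (j : ℕ) (m : ℤ), |ω j m ^ 2 - S j ((m : ℝ) / T)| ≤ C j / T + D j / R)
    (hSlip : ∀ (j : ℕ) (x y : ℝ), |S j x - S j y| ≤ L j * |x - y|)
    (hCs : Summable C) (hCsum : ∑' j : ℕ, C j ≤ Cb)
    (hDs : Summable D) (hDsum : ∑' j : ℕ, D j ≤ Db)
    (hLs : Summable (fun j : ℕ => 2 ^ j * L j))
    (hLsum : ∑' j : ℕ, 2 ^ j * L j ≤ Lb)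
    (k τ : ℤ)
    (hωsum : Summable
      (fun p : ℕ × ℤ => ω p.1 (p.2 + k) ^ 2 * |ψ p.1 p.2 * ψ p.1 (p.2 - τ)|))
    (hSsum : Summable (fun j : ℕ => |S j ((k : ℝ) / T)|)) :
    |(∑' j : ℕ, ∑' n : ℤ, ω j (n + k) ^ 2 * (ψ j n * ψ j (n - τ))) -
        ∑' j : ℕ, S j ((k : ℝ) / T) * ∑' n : ℤ, ψ j n * ψ j (n - τ)|
      ≤ (Cb + K * Lb) / T + Db / R :=
  autocovariance_approximation_general ψ ω S K Cb Db Lb hK T R hT hR C D L hC hD hL hψsq hψnorm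
    hψsupp hamp hSlip hCs hCsum hDs hDsum hLs hLsum k τ hωsum hSsum
end

section
/- Let Ψ' : ℕ → ℕ → ℤ → ℝ (write Ψ'_{j,l} : ℤ → ℝ) and L : ℕ → ℝ with L_l ≥ 0, and constants K ≥ 0, Λ ≥ 0 satisfy: (i) Ψ'_{j,l}(n) = 0 whenever |n| > K·(2^j + 2^l); (ii) each Ψ'_{j,l} is square-summable with A_{j,l} := Σ_{n∈ℤ} Ψ'_{j,l}(n)² satisfying A_{j,l} = A_{l,j} ≥ 0 and Σ_{j'∈ℕ} 2^{-j'}·A_{j',l} = 1 for every l; (iii) Σ_{l∈ℕ} 2^l·L_l ≤ Λ. Then for every j ∈ ℕ: Σ_{l∈ℕ} L_l · Σ_{n∈ℤ} |n|·Ψ'_{j,l}(n)² ≤ 2·K·Λ·2^j. -/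
/-- `Σ_l L_l Σ_n |n|·Ψ'_{j,l}(n)² ≤ 2·K·Λ·2^j` for cross-correlation
wavelets with support of length `K(2^j+2^l)`, symmetric nonnegative inner-product
matrix `A` normalized by `Σ_{j'} 2^{-j'}A_{j',l} = 1`, and `Σ_l 2^l L_l ≤ Λ`. -/
theorem cross_wavelet_support_moment_bound (Ψ' : ℕ → ℕ → ℤ → ℝ) (L : ℕ → ℝ)
    (hL : ∀ l, 0 ≤ L l) (K Λ : ℝ) (hK : 0 ≤ K) (hΛ : 0 ≤ Λ)
    (hsupp : ∀ (j l : ℕ) (n : ℤ), K * ((2 : ℝ) ^ j + 2 ^ l) < |(n : ℝ)| → Ψ' j l n = 0)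
    (hsq : ∀ j l, Summable (fun n : ℤ => Ψ' j l n ^ 2))
    (hsymm : ∀ j l : ℕ, (∑' n : ℤ, Ψ' j l n ^ 2) = ∑' n : ℤ, Ψ' l j n ^ 2)
    (hnonneg : ∀ j l : ℕ, 0 ≤ ∑' n : ℤ, Ψ' j l n ^ 2)
    (hnormS : ∀ l : ℕ, Summable (fun j' : ℕ => ((2 : ℝ) ^ j')⁻¹ * ∑' n : ℤ, Ψ' j' l n ^ 2))
    (hnorm : ∀ l : ℕ, ∑' j' : ℕ, ((2 : ℝ) ^ j')⁻¹ * (∑' n : ℤ, Ψ' j' l n ^ 2) = 1)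
    (hLs : Summable (fun l : ℕ => 2 ^ l * L l))
    (hLΛ : ∑' l : ℕ, 2 ^ l * L l ≤ Λ) :
    ∀ j : ℕ, ∑' l : ℕ, L l * ∑' n : ℤ, |(n : ℝ)| * Ψ' j l n ^ 2 ≤ 2 * K * Λ * 2 ^ j := by
  intro j
  set A : ℕ → ℕ → ℝ := fun j l => ∑' n : ℤ, Ψ' j l n ^ 2 with hA
  -- A j l ≤ 2^l and A j l ≤ 2^j
  have hAle : ∀ j' l : ℕ, A j' l ≤ 2 ^ j' := by
    intro j' l
    have h := Summable.le_tsum (hnormS l) j' (fun m _ =>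
      mul_nonneg (by positivity) (hnonneg m l))
    rw [hnorm l] at h
    have h2 : (0:ℝ) < (2:ℝ) ^ j' := by positivity
    calc A j' l = 2 ^ j' * (((2:ℝ) ^ j')⁻¹ * A j' l) := by
          field_simp
      _ ≤ 2 ^ j' * 1 := by
          exact mul_le_mul_of_nonneg_left h (le_of_lt h2)
      _ = 2 ^ j' := mul_one _
  -- pointwise: |n| * Ψ'² ≤ K(2^j+2^l) * Ψ'²
  have hpt : ∀ l : ℕ, ∀ n : ℤ,
      |(n:ℝ)| * Ψ' j l n ^ 2 ≤ K * ((2:ℝ) ^ j + 2 ^ l) * Ψ' j l n ^ 2 := by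
    intro l n
    by_cases h : K * ((2:ℝ) ^ j + 2 ^ l) < |(n:ℝ)|
    · rw [hsupp j l n h]; simp
    · push_neg at h
      exact mul_le_mul_of_nonneg_right h (sq_nonneg _)
  have hsumM : ∀ l : ℕ, Summable (fun n : ℤ => |(n:ℝ)| * Ψ' j l n ^ 2) := by
    intro l
    refine Summable.of_nonneg_of_le (fun n => mul_nonneg (abs_nonneg _) (sq_nonneg _))
      (hpt l) ?_
    exact (hsq j l).mul_left _
  -- inner bound
  have hinner : ∀ l : ℕ,
      (∑' n : ℤ, |(n:ℝ)| * Ψ' j l n ^ 2) ≤ K * ((2:ℝ) ^ j + 2 ^ l) * A j l := by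
    intro l
    calc (∑' n : ℤ, |(n:ℝ)| * Ψ' j l n ^ 2)
        ≤ ∑' n : ℤ, K * ((2:ℝ) ^ j + 2 ^ l) * Ψ' j l n ^ 2 :=
          Summable.tsum_le_tsum (hpt l) (hsumM l) ((hsq j l).mul_left _)
      _ = K * ((2:ℝ) ^ j + 2 ^ l) * A j l := tsum_mul_left
  -- K(2^j+2^l) A j l ≤ 2K·2^j·2^l
  have hkey : ∀ l : ℕ, K * ((2:ℝ) ^ j + 2 ^ l) * A j l ≤ 2 * K * 2 ^ j * 2 ^ l := by
    intro l
    have h1 : A j l ≤ 2 ^ l := by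
      have h := hAle l j
      show (∑' n : ℤ, Ψ' j l n ^ 2) ≤ 2 ^ l
      rw [hsymm j l]; exact h
    have h2 : A j l ≤ 2 ^ j := hAle j l
    have hAn : 0 ≤ A j l := hnonneg j l
    have e1 : K * (2:ℝ) ^ j * A j l ≤ K * 2 ^ j * 2 ^ l :=
      mul_le_mul_of_nonneg_left h1 (by positivity)
    have e2 : K * (2:ℝ) ^ l * A j l ≤ K * 2 ^ l * 2 ^ j :=
      mul_le_mul_of_nonneg_left h2 (by positivity)
    nlinarith [e1, e2]
  -- term-wise bound for the outer sum
  have houter : ∀ l : ℕ,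
      L l * ∑' n : ℤ, |(n:ℝ)| * Ψ' j l n ^ 2 ≤ 2 * K * 2 ^ j * (2 ^ l * L l) := by
    intro l
    have h := (hinner l).trans (hkey l)
    calc L l * ∑' n : ℤ, |(n:ℝ)| * Ψ' j l n ^ 2
        ≤ L l * (2 * K * 2 ^ j * 2 ^ l) :=
          mul_le_mul_of_nonneg_left h (hL l)
      _ = 2 * K * 2 ^ j * (2 ^ l * L l) := by ring
  have hRHSsum : Summable (fun l : ℕ => 2 * K * 2 ^ j * ((2:ℝ) ^ l * L l)) :=
    hLs.mul_left _
  have hLHSnn : ∀ l : ℕ, 0 ≤ L l * ∑' n : ℤ, |(n:ℝ)| * Ψ' j l n ^ 2 := by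
    intro l
    exact mul_nonneg (hL l) (tsum_nonneg fun n => mul_nonneg (abs_nonneg _) (sq_nonneg _))
  have hLHSsum : Summable (fun l : ℕ => L l * ∑' n : ℤ, |(n:ℝ)| * Ψ' j l n ^ 2) :=
    Summable.of_nonneg_of_le hLHSnn houter hRHSsum
  calc ∑' l : ℕ, L l * ∑' n : ℤ, |(n:ℝ)| * Ψ' j l n ^ 2
      ≤ ∑' l : ℕ, 2 * K * 2 ^ j * ((2:ℝ) ^ l * L l) :=
        Summable.tsum_le_tsum houter hLHSsum hRHSsum
    _ = 2 * K * 2 ^ j * ∑' l : ℕ, (2:ℝ) ^ l * L l := tsum_mul_left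
    _ ≤ 2 * K * 2 ^ j * Λ := by
        exact mul_le_mul_of_nonneg_left hLΛ (by positivity)
    _ = 2 * K * Λ * 2 ^ j := by ring
end
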